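/- With the setup of a split disjunction and unique (nondegenerate) bases at the term optima p¹, p²: every facet-defining inequality of the disjunctive hull P_D = cl conv(P¹ ∪ P²) that is tight at both p¹ and p² is valid for the simple point-ray hull P_D⁰ = conv({p¹,p²}) + cone(R⁰); i.e., it satisfies α·pᵗ = β and α·r ≥ 0 for all r ∈ R⁰. -/

import Mathlib

open Pointwise

noncomputable section

/-- Dot product on `ℝⁿ`. -/
def dot {n : ℕ} (a x : Fin n → ℝ) : ℝ := ∑ i, a i * x i

/-- Conical (nonnegative) hull of a set of rays. -/
def coneHull {n : ℕ} (R : Set (Fin n → ℝ)) : Set (Fin n → ℝ) :=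
  {y | ∃ (s : Finset (Fin n → ℝ)) (c : (Fin n → ℝ) → ℝ),
      ↑s ⊆ R ∧ (∀ r ∈ s, 0 ≤ c r) ∧ y = ∑ r ∈ s, c r • r}

/-- The point-ray hull `conv(P) + cone(R)` (Minkowski sum). -/
def pointRayHull {n : ℕ} (P R : Set (Fin n → ℝ)) : Set (Fin n → ℝ) :=
  convexHull ℝ P + coneHull R

/-- A polyhedron: intersection of finitely many halfspaces. -/
def IsPolyhedron {n : ℕ} (S : Set (Fin n → ℝ)) : Prop :=
  ∃ (m : ℕ) (A : Fin m → (Fin n → ℝ)) (b : Fin m → ℝ),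
    S = {x | ∀ i, b i ≤ dot (A i) x}

/-- Recession cone of a set. -/
def recessionCone {n : ℕ} (S : Set (Fin n → ℝ)) : Set (Fin n → ℝ) :=
  {r | ∀ x ∈ S, ∀ t : ℝ, 0 ≤ t → x + t • r ∈ S}

/-- A set is pointed if its recession cone contains no line. -/
def IsPointed {n : ℕ} (S : Set (Fin n → ℝ)) : Prop :=
  ∀ r ∈ recessionCone S, -r ∈ recessionCone S → r = 0

/-- `x` generates an extreme ray of the cone `C`: it is a nonzero element of `C` that
cannot be written as a sum of two elements of `C` not both parallel to it. -/
def IsExtremeRay {V : Type*} [AddCommGroup V] [Module ℝ V] (C : Set V) (x : V) : Prop :=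
  x ∈ C ∧ x ≠ 0 ∧ ∀ y ∈ C, ∀ z ∈ C, x = y + z →
    (∃ t : ℝ, 0 ≤ t ∧ y = t • x) ∧ (∃ t : ℝ, 0 ≤ t ∧ z = t • x)

/-- Affine dimension of a subset of `ℝⁿ`. -/
def affDim {n : ℕ} (S : Set (Fin n → ℝ)) : ℕ :=
  Module.finrank ℝ (affineSpan ℝ S).direction

/-!
If `p` lies in `{x | ∀ i, bᵢ ≤ Aᵢ·x}` and `Aᵢ·q ≥ 0` on the rows tight at `p`, then `p + s q` stays
in the polyhedron for small `s > 0`, since the slack rows have room to spare. An inequality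
`β ≤ α·x` valid for the polyhedron and tight at `p` therefore satisfies `s (α·q) ≥ 0`, i.e.
`α·q ≥ 0`. By nondegeneracy the rows tight at `pᵗ` are exactly the basis rows, which are
nonnegative on the rays of the basis cone `Cᵗ`; and `Pᵗ` lies in the disjunctive hull. Validity
on `conv{p⁰, p¹} + cone(R⁰)` then follows from tightness at both `pᵗ` and nonnegativity on `R⁰`.
-/

section Dot

variable {n : ℕ}

lemma dot_add (a x y : Fin n → ℝ) : dot a (x + y) = dot a x + dot a y :=
  dotProduct_add a x y

lemma dot_smul (a : Fin n → ℝ) (s : ℝ) (x : Fin n → ℝ) : dot a (s • x) = s * dot a x :=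
  dotProduct_smul s a x

lemma dot_sum (a : Fin n → ℝ) {ι : Type*} (s : Finset ι) (f : ι → Fin n → ℝ) :
    dot a (∑ i ∈ s, f i) = ∑ i ∈ s, dot a (f i) :=
  dotProduct_sum a s f

lemma isLinearMap_dot (a : Fin n → ℝ) : IsLinearMap ℝ (dot a) :=
  ⟨dot_add a, dot_smul a⟩

end Dot

section FeasibleDirection

variable {n : ℕ} {ι : Type*} {A : ι → Fin n → ℝ} {b : ι → ℝ} {p q : Fin n → ℝ}

lemma eventually_add_smul_mem_polyhedron [Finite ι] (hp : ∀ i, b i ≤ dot (A i) p)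
    (hq : ∀ i, dot (A i) p = b i → 0 ≤ dot (A i) q) :
    ∀ᶠ s in nhdsWithin (0 : ℝ) (Set.Ioi 0), ∀ i, b i ≤ dot (A i) (p + s • q) := by
  refine Filter.eventually_all.2 fun i => ?_
  simp only [dot_add, dot_smul]
  rcases (hp i).eq_or_lt with htight | hslack
  · filter_upwards [self_mem_nhdsWithin] with s (hs : 0 < s)
    nlinarith [hq i htight.symm]
  · have hlim : Filter.Tendsto (fun s : ℝ => dot (A i) p + s * dot (A i) q)
        (nhdsWithin 0 (Set.Ioi 0)) (nhds (dot (A i) p)) :=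
      ((continuous_const.add (continuous_id.mul continuous_const)).tendsto' 0 _
        (by simp)).mono_left nhdsWithin_le_nhds
    exact (hlim.eventually (lt_mem_nhds hslack)).mono fun _ => le_of_lt

lemma dot_nonneg_of_tight_of_valid [Finite ι] (hp : ∀ i, b i ≤ dot (A i) p)
    (hq : ∀ i, dot (A i) p = b i → 0 ≤ dot (A i) q) {α : Fin n → ℝ} {β : ℝ}
    (hvalid : ∀ x, (∀ i, b i ≤ dot (A i) x) → β ≤ dot α x) (htight : dot α p = β) :
    0 ≤ dot α q := by
  obtain ⟨s, hmem, hs⟩ :=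
    ((eventually_add_smul_mem_polyhedron hp hq).and self_mem_nhdsWithin).exists
  have hle := hvalid _ hmem
  rw [dot_add, dot_smul, htight] at hle
  exact nonneg_of_mul_nonneg_right (by linarith) hs

end FeasibleDirection

section Cones

variable {n : ℕ}

lemma subset_coneHull (R : Set (Fin n → ℝ)) : R ⊆ coneHull R :=
  fun r hr => ⟨{r}, fun _ => 1, by simpa using hr, fun _ _ => zero_le_one, by simp⟩

lemma dot_nonneg_of_mem_coneHull {R : Set (Fin n → ℝ)} {α : Fin n → ℝ}
    (hR : ∀ r ∈ R, 0 ≤ dot α r) {z : Fin n → ℝ} (hz : z ∈ coneHull R) : 0 ≤ dot α z := by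
  obtain ⟨s, c, hs, hc, rfl⟩ := hz
  rw [dot_sum]
  exact Finset.sum_nonneg fun r hr => by
    rw [dot_smul]
    exact mul_nonneg (hc r hr) (hR r (hs hr))

lemma dot_nonneg_of_add_coneHull_eq {ι : Type*} {A : ι → Fin n → ℝ} {b : ι → ℝ}
    {p : Fin n → ℝ} {R : Set (Fin n → ℝ)}
    (hcone : ({p} + coneHull R : Set (Fin n → ℝ)) = {x | ∀ i, b i ≤ dot (A i) x})
    (hp : ∀ i, dot (A i) p = b i) {r : Fin n → ℝ} (hr : r ∈ R) (i : ι) :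
    0 ≤ dot (A i) r := by
  have hmem : p + r ∈ ({p} + coneHull R : Set (Fin n → ℝ)) :=
    Set.add_mem_add rfl (subset_coneHull R hr)
  rw [hcone] at hmem
  have hrow := hmem i
  rw [dot_add, hp] at hrow
  linarith

lemma le_dot_of_mem_pointRayHull {P R : Set (Fin n → ℝ)} {α : Fin n → ℝ} {β : ℝ}
    (hP : ∀ x ∈ P, β ≤ dot α x) (hR : ∀ r ∈ R, 0 ≤ dot α r) {x : Fin n → ℝ}
    (hx : x ∈ pointRayHull P R) : β ≤ dot α x := by
  obtain ⟨y, hy, z, hz, rfl⟩ := hx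
  have hβy : β ≤ dot α y :=
    (convex_halfSpace_ge (isLinearMap_dot α) β).convexHull_subset_iff.2 hP hy
  rw [dot_add]
  linarith [dot_nonneg_of_mem_coneHull hR hz]

end Cones

theorem stmt_8_general {n : ℕ}
    (Pt : Fin 2 → Set (Fin n → ℝ))
    (m : Fin 2 → ℕ) (A : ∀ t, Fin (m t) → (Fin n → ℝ)) (b : ∀ t, Fin (m t) → ℝ)
    (hrep : ∀ t, Pt t = {x | ∀ i, b t i ≤ dot (A t i) x})
    (p : Fin 2 → (Fin n → ℝ))
    (hvert : ∀ t, p t ∈ Set.extremePoints ℝ (Pt t))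
    (e : ∀ t, Fin n → Fin (m t))
    (htightset : ∀ t i, dot (A t i) (p t) = b t i ↔ i ∈ Set.range (e t))
    (r : Fin 2 → Fin n → (Fin n → ℝ))
    (hbasiscone : ∀ t, ({p t} + coneHull (Set.range (r t)) : Set (Fin n → ℝ)) =
      {x | ∀ j, b t (e t j) ≤ dot (A t (e t j)) x})
    (PD0 : Set (Fin n → ℝ))
    (hPD0 : PD0 = convexHull ℝ {p 0, p 1} + coneHull (⋃ t, Set.range (r t)))
    (α : Fin n → ℝ) (β : ℝ)
    (hvalidD : ∀ x ∈ closure (convexHull ℝ (Pt 0 ∪ Pt 1)), β ≤ dot α x)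
    (htight0 : dot α (p 0) = β) (htight1 : dot α (p 1) = β) :
    (∀ t j, 0 ≤ dot α (r t j)) ∧ ∀ x ∈ PD0, β ≤ dot α x := by
  have htight : ∀ t, dot α (p t) = β := Fin.forall_fin_two.2 ⟨htight0, htight1⟩
  have hsub : ∀ t, Pt t ⊆ closure (convexHull ℝ (Pt 0 ∪ Pt 1)) := by
    intro t
    refine .trans ?_ ((subset_convexHull ℝ _).trans subset_closure)
    fin_cases t
    exacts [Set.subset_union_left, Set.subset_union_right]
  have hrays : ∀ t j, 0 ≤ dot α (r t j) := by
    intro t j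
    have hp : ∀ i, b t i ≤ dot (A t i) (p t) := by
      have hmem := (hvert t).1
      rwa [hrep t] at hmem
    refine dot_nonneg_of_tight_of_valid hp (fun i hi => ?_) (fun x hx => ?_) (htight t)
    · obtain ⟨k, rfl⟩ := (htightset t i).1 hi
      exact dot_nonneg_of_add_coneHull_eq (A := fun k => A t (e t k)) (hbasiscone t)
        (fun k => (htightset t _).2 ⟨k, rfl⟩) ⟨j, rfl⟩ k
    · exact hvalidD x (hsub t (by rwa [hrep t]))
  refine ⟨hrays, fun x hx => ?_⟩
  subst hPD0
  refine le_dot_of_mem_pointRayHull (fun y hy => ?_) (fun _ hr => ?_) hx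
  · rcases hy with rfl | rfl
    exacts [htight0.ge, htight1.ge]
  · obtain ⟨t, j, rfl⟩ := Set.mem_iUnion.1 hr
    exact hrays t j

/-- Same split-disjunction setup with unique nondegenerate bases at the
`c`-optimal vertices `p⁰, p¹`: every facet-defining inequality of the disjunctive hull
`P_D = cl conv(P⁰ ∪ P¹)` that is tight at both `p⁰` and `p¹` is valid for the simple point-ray
hull `P_D⁰ = conv({p⁰,p¹}) + cone(R⁰)`; i.e., it satisfies `α·r ≥ 0` for every ray `r ∈ R⁰`
(and `α·pᵗ = β`). -/
theorem stmt_8 {n : ℕ} (P : Set (Fin n → ℝ)) (hpoly : IsPolyhedron P)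
    (pi : Fin n → ℝ) (pi0 : ℝ)
    (Pt : Fin 2 → Set (Fin n → ℝ))
    (hsplit0 : Pt 0 = {x ∈ P | dot pi x ≤ pi0})
    (hsplit1 : Pt 1 = {x ∈ P | pi0 + 1 ≤ dot pi x})
    (hpointed : ∀ t, IsPointed (Pt t))
    (c : Fin n → ℝ)
    (m : Fin 2 → ℕ) (A : ∀ t, Fin (m t) → (Fin n → ℝ)) (b : ∀ t, Fin (m t) → ℝ)
    (hrep : ∀ t, Pt t = {x | ∀ i, b t i ≤ dot (A t i) x})
    (p : Fin 2 → (Fin n → ℝ))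
    (hvert : ∀ t, p t ∈ Set.extremePoints ℝ (Pt t))
    (hopt : ∀ t, ∀ x ∈ Pt t, dot c (p t) ≤ dot c x)
    (e : ∀ t, Fin n → Fin (m t)) (hinj : ∀ t, Function.Injective (e t))
    (htightset : ∀ t i, dot (A t i) (p t) = b t i ↔ i ∈ Set.range (e t))
    (hnormindep : ∀ t, LinearIndependent ℝ (fun j => A t (e t j)))
    (r : Fin 2 → Fin n → (Fin n → ℝ))
    (hbasiscone : ∀ t, ({p t} + coneHull (Set.range (r t)) : Set (Fin n → ℝ)) =
      {x | ∀ j, b t (e t j) ≤ dot (A t (e t j)) x})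
    (PD0 : Set (Fin n → ℝ))
    (hPD0 : PD0 = convexHull ℝ {p 0, p 1} + coneHull (⋃ t, Set.range (r t)))
    (α : Fin n → ℝ) (β : ℝ)
    (hvalidD : ∀ x ∈ closure (convexHull ℝ (Pt 0 ∪ Pt 1)), β ≤ dot α x)
    (hfacetD : affDim (closure (convexHull ℝ (Pt 0 ∪ Pt 1)) ∩ {x | dot α x = β}) = n - 1)
    (htight0 : dot α (p 0) = β) (htight1 : dot α (p 1) = β) :
    (∀ t j, 0 ≤ dot α (r t j)) ∧ ∀ x ∈ PD0, β ≤ dot α x :=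
  stmt_8_general Pt m A b hrep p hvert e htightset r hbasiscone PD0 hPD0 α β hvalidD htight0 htight1
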